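/- arXiv:2310.18073 — 3 statements merged into one kernel-verified Lean document; each statement's English description precedes it below -/
import Mathlib

section
/- In the tree built by the nearest-preceding-larger-size rule, x_j is a (non-root) ancestor of x_i if and only if j < i and s_j > s_k for every k with j < k ≤ i. -/
/-- Parent of block `i`: the nearest (largest-index) preceding block with strictly
larger font size, or `none` (the root) if no such block exists. -/
noncomputable def parentIdx {n : ℕ} (s : Fin n → ℝ) (i : Fin n) : Option (Fin n) :=
  if h : (Finset.univ.filter fun j => j < i ∧ s i < s j).Nonempty
  then some ((Finset.univ.filter fun j => j < i ∧ s i < s j).max' h)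
  else none

/-- One step of following parent links, on `Option` (where `none` is the root). -/
def pstep {α : Type*} (p : α → Option α) : Option α → Option α := fun o => o.bind p

/-- `isAnc s a b`: `a` is a proper (non-root) ancestor of `b` in the tree built by the
nearest-preceding-larger-size rule. -/
def isAnc {n : ℕ} (s : Fin n → ℝ) (a b : Fin n) : Prop :=
  Relation.TransGen (fun u v => parentIdx s v = some u) a b

lemma parent_spec {n : ℕ} (s : Fin n → ℝ) {i j : Fin n}
    (h : parentIdx s i = some j) : j < i ∧ ∀ k : Fin n, j < k → k ≤ i → s k < s j := by
  unfold parentIdx at h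
  split_ifs at h with hne
  · have hj : j = (Finset.univ.filter fun j => j < i ∧ s i < s j).max' hne :=
      (Option.some_injective _ h).symm
    have hmem : j ∈ Finset.univ.filter fun j => j < i ∧ s i < s j := by
      rw [hj]; exact Finset.max'_mem _ _
    simp only [Finset.mem_filter, Finset.mem_univ, true_and] at hmem
    refine ⟨hmem.1, fun k hjk hki => ?_⟩
    by_contra hc
    push_neg at hc
    rcases eq_or_lt_of_le hki with rfl | hki'
    · exact absurd hmem.2 (not_lt.mpr hc)
    · have : k ∈ Finset.univ.filter fun j => j < i ∧ s i < s j := by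
        simp only [Finset.mem_filter, Finset.mem_univ, true_and]
        exact ⟨hki', lt_of_lt_of_le hmem.2 hc⟩
      have := Finset.le_max' _ _ this
      rw [← hj] at this
      exact absurd hjk (not_lt.mpr this)

lemma back {n : ℕ} (s : Fin n → ℝ) :
    ∀ m : ℕ, ∀ i j : Fin n, i.val = m → j < i →
    (∀ k : Fin n, j < k → k ≤ i → s k < s j) → isAnc s j i := by
  intro m
  induction m using Nat.strong_induction_on with
  | _ m ih =>
    intro i j hm hji hall
    have hjmem : j ∈ Finset.univ.filter fun k => k < i ∧ s i < s k := by
      simp only [Finset.mem_filter, Finset.mem_univ, true_and]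
      exact ⟨hji, hall i hji le_rfl⟩
    have hne : (Finset.univ.filter fun k => k < i ∧ s i < s k).Nonempty := ⟨j, hjmem⟩
    set q := (Finset.univ.filter fun k => k < i ∧ s i < s k).max' hne with hq
    have hstep : parentIdx s i = some q := by
      unfold parentIdx; rw [dif_pos hne]
    have hjq : j ≤ q := Finset.le_max' _ _ hjmem
    have hqmem := Finset.max'_mem _ hne
    simp only [Finset.mem_filter, Finset.mem_univ, true_and] at hqmem
    rcases eq_or_lt_of_le hjq with rfl | hjq'
    · exact Relation.TransGen.single hstep
    · have hanc : isAnc s j q := by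
        refine ih q.val (by omega) q j rfl hjq' fun k hk hk2 => ?_
        exact hall k hk (le_trans hk2 (le_of_lt hqmem.1))
      exact hanc.tail hstep

/-- `x_j` is a non-root ancestor of `x_i` iff `j < i` and `s j > s k` for every `k` with
`j < k ≤ i`. -/
theorem stmt2 {n : ℕ} (s : Fin n → ℝ) (i j : Fin n) :
    isAnc s j i ↔ (j < i ∧ ∀ k : Fin n, j < k → k ≤ i → s k < s j) := by
  constructor
  · intro h
    induction h with
    | single h => exact parent_spec s h
    | tail _ h2 ih =>
      obtain ⟨h1, hall1⟩ := ih
      obtain ⟨h3, hall3⟩ := parent_spec s h2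
      refine ⟨lt_trans h1 h3, fun k hk hk2 => ?_⟩
      rcases le_or_gt k _ with hkm | hkm
      · exact hall1 k hk hkm
      · exact lt_trans (hall3 k hkm hk2) (hall1 _ h1 le_rfl)
  · rintro ⟨h1, h2⟩
    exact back s i.val i j rfl h1 h2
end

section
/- The pre-order (depth-first, children visited in order of increasing index) traversal of the tree built by the nearest-preceding-larger-size rule, starting at the root and omitting the root, visits the blocks exactly in reading order x_1, x_2, …, x_n. -/
/-- `ancOrSelf s a b`: `a` equals `b` or is a proper ancestor of `b`. -/
def ancOrSelf {n : ℕ} (s : Fin n → ℝ) (a b : Fin n) : Prop :=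
  Relation.ReflTransGen (fun u v => parentIdx s v = some u) a b

/-- `preBefore s u v`: in the pre-order (depth-first) traversal that visits a node before
its descendants and visits children (and the root's children) in order of increasing index,
`u` is visited strictly before `v`: either `u` is an ancestor of `v`, or `u` and `v`
descend (reflexively) from two distinct siblings `a < b` respectively. -/
def preBefore {n : ℕ} (s : Fin n → ℝ) (u v : Fin n) : Prop :=
  isAnc s u v ∨
    ∃ a b : Fin n, parentIdx s a = parentIdx s b ∧ a < b ∧
      ancOrSelf s a u ∧ ancOrSelf s b v

/-!
The ancestors-or-self of `b` are exactly the `a ≤ b` whose size beats every size on `(a, b]`.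
Siblings `a < b` then have disjoint subtrees, the one of `a` ending before `b`, which gives
`preBefore s u v → u < v`. Conversely, for `u < v` let `b` be the last maximiser of `s` on
`(u, v]`, an ancestor-or-self of `v`. Either `u` is the parent of `b`, or every size on `[u, b)`
is at most `s b`; then the set of `j ≤ u` such that every size on `[j, b)` is at most `s b` is
the part of `[0, u]` after the parent of `b`, and the last maximiser of `s` on it is an
ancestor-or-self of `u` with the same parent as `b`.
-/

lemma Finset.exists_max_image_last {α β : Type*} [LinearOrder α] [LinearOrder β] (f : α → β)
    {T : Finset α} (hT : T.Nonempty) :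
    ∃ m ∈ T, (∀ t ∈ T, f t ≤ f m) ∧ ∀ t ∈ T, m < t → f t < f m := by
  obtain ⟨m, hm, hmax⟩ := T.exists_max_image (fun t => toLex (f t, t)) hT
  refine ⟨m, hm, fun t ht => ?_, fun t ht hmt => ?_⟩
  · exact (Prod.Lex.toLex_le_toLex'.1 (hmax t ht)).1
  · rcases Prod.Lex.toLex_le_toLex.1 (hmax t ht) with h | ⟨h, hle⟩
    · exact h
    · exact absurd hle hmt.not_ge

variable {n : ℕ} {s : Fin n → ℝ}

lemma parentIdx_eq_some_iff {x p : Fin n} :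
    parentIdx s x = some p ↔ p < x ∧ s x < s p ∧ ∀ j, p < j → j < x → s j ≤ s x := by
  unfold parentIdx
  split_ifs with hC
  · rw [Option.some_inj, Finset.max'_eq_iff]
    simp only [Finset.mem_filter, Finset.mem_univ, true_and, and_imp]
    refine ⟨fun ⟨⟨hpx, hsp⟩, hmax⟩ => ⟨hpx, hsp, fun j hpj hjx => ?_⟩,
      fun ⟨hpx, hsp, hdom⟩ => ⟨⟨hpx, hsp⟩, fun j hjx hsj => ?_⟩⟩
    · exact not_lt.1 fun hsj => (hmax j hjx hsj).not_gt hpj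
    · exact not_lt.1 fun hpj => (hdom j hpj hjx).not_gt hsj
  · refine iff_of_false (by simp) fun ⟨hpx, hsp, _⟩ => hC ⟨p, ?_⟩
    simp [hpx, hsp]

lemma parentIdx_eq_none_iff {x : Fin n} : parentIdx s x = none ↔ ∀ j < x, s j ≤ s x := by
  unfold parentIdx
  split_ifs with hC
  · obtain ⟨j, hj⟩ := hC
    simp only [Finset.mem_filter, Finset.mem_univ, true_and] at hj
    exact iff_of_false (by simp) fun h => (h j hj.1).not_gt hj.2
  · simp only [Finset.not_nonempty_iff_eq_empty, Finset.filter_eq_empty_iff, Finset.mem_univ,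
      true_implies, not_and, not_lt] at hC
    exact iff_of_true rfl hC

lemma ancOrSelf_iff {a b : Fin n} :
    ancOrSelf s a b ↔ a ≤ b ∧ ∀ j, a < j → j ≤ b → s j < s a := by
  constructor
  · intro h
    induction h using Relation.ReflTransGen.head_induction_on with
    | refl => exact ⟨le_rfl, fun j hbj hjb => absurd hjb hbj.not_ge⟩
    | @head a c hac _ ih =>
      obtain ⟨hac, hsc, hdom⟩ := parentIdx_eq_some_iff.1 hac
      refine ⟨hac.le.trans ih.1, fun j haj hjb => ?_⟩
      rcases lt_or_ge j c with hjc | hcj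
      · exact (hdom j haj hjc).trans_lt hsc
      rcases hcj.eq_or_lt with rfl | hcj
      · exact hsc
      · exact (ih.2 j hcj hjb).trans hsc
  · rintro ⟨hab, hdom⟩
    induction b using WellFoundedLT.induction with
    | ind b ih =>
      rcases hab.eq_or_lt with rfl | hab
      · exact .refl
      have hsb := hdom b hab le_rfl
      obtain ⟨p, hp⟩ := Option.ne_none_iff_exists'.1 fun h =>
        (parentIdx_eq_none_iff.1 h a hab).not_gt hsb
      obtain ⟨hpb, -, hpdom⟩ := parentIdx_eq_some_iff.1 hp
      have hap : a ≤ p := not_lt.1 fun hpa => (hpdom a hpa hab).not_gt hsb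
      exact (ih p hpb hap fun j haj hjp => hdom j haj (hjp.trans hpb.le)).tail hp

lemma isAnc.lt {a b : Fin n} (h : isAnc s a b) : a < b := by
  induction h with
  | single hp => exact (parentIdx_eq_some_iff.1 hp).1
  | tail _ hp ih => exact ih.trans (parentIdx_eq_some_iff.1 hp).1

lemma lt_of_ancOrSelf_of_parentIdx_eq {a b u : Fin n} (hpar : parentIdx s a = parentIdx s b)
    (hab : a < b) (hau : ancOrSelf s a u) : u < b := by
  by_contra! hbu
  have hsb : s b < s a := (ancOrSelf_iff.1 hau).2 b hab hbu
  cases hp : parentIdx s b with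
  | none => exact (parentIdx_eq_none_iff.1 hp a hab).not_gt hsb
  | some p =>
    have hpa := (parentIdx_eq_some_iff.1 (hpar.trans hp)).1
    exact ((parentIdx_eq_some_iff.1 hp).2.2 a hpa hab).not_gt hsb

lemma preBefore.lt {u v : Fin n} (h : preBefore s u v) : u < v := by
  rcases h with hanc | ⟨a, b, hpar, hab, hau, hbv⟩
  · exact hanc.lt
  · exact (lt_of_ancOrSelf_of_parentIdx_eq hpar hab hau).trans_le (ancOrSelf_iff.1 hbv).1

lemma exists_sibling_ancOrSelf {u b : Fin n} (hub : u < b)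
    (hdom : ∀ j, u ≤ j → j < b → s j ≤ s b) :
    ∃ a, parentIdx s a = parentIdx s b ∧ a ≤ u ∧ ancOrSelf s a u := by
  set T := Finset.univ.filter fun j => j ≤ u ∧ ∀ k, j ≤ k → k < b → s k ≤ s b
  have mem_T {j} : j ∈ T ↔ j ≤ u ∧ ∀ k, j ≤ k → k < b → s k ≤ s b := by simp [T]
  obtain ⟨a, haT, hamax, halast⟩ := Finset.exists_max_image_last s ⟨u, mem_T.2 ⟨le_rfl, hdom⟩⟩
  obtain ⟨hau, hadom⟩ := mem_T.1 haT
  have hab : a < b := hau.trans_lt hub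
  have hanc : ancOrSelf s a u := ancOrSelf_iff.2 ⟨hau, fun j haj hju =>
    halast j (mem_T.2 ⟨hju, fun k hjk hkb => hadom k (haj.le.trans hjk) hkb⟩) haj⟩
  refine ⟨a, ?_, hau, hanc⟩
  cases hp : parentIdx s b with
  | none =>
    have hpb := parentIdx_eq_none_iff.1 hp
    exact parentIdx_eq_none_iff.2 fun j hja =>
      hamax j (mem_T.2 ⟨hja.le.trans hau, fun k _ hkb => hpb k hkb⟩)
  | some p =>
    obtain ⟨hpb, hsp, hpdom⟩ := parentIdx_eq_some_iff.1 hp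
    have hpa : p < a := not_le.1 fun hap => (hadom p hap hpb).not_gt hsp
    refine parentIdx_eq_some_iff.2 ⟨hpa, (hadom a le_rfl hab).trans_lt hsp, fun j hpj hja => ?_⟩
    exact hamax j (mem_T.2 ⟨hja.le.trans hau, fun k hjk hkb => hpdom k (hpj.trans_le hjk) hkb⟩)

lemma preBefore_of_lt {u v : Fin n} (huv : u < v) : preBefore s u v := by
  obtain ⟨b, hb, hbmax, hblast⟩ := Finset.exists_max_image_last s (Finset.nonempty_Ioc.2 huv)
  obtain ⟨hub, hbv_le⟩ := Finset.mem_Ioc.1 hb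
  have hbv : ancOrSelf s b v := ancOrSelf_iff.2 ⟨hbv_le, fun j hbj hjv =>
    hblast j (Finset.mem_Ioc.2 ⟨hub.trans hbj, hjv⟩) hbj⟩
  have hdom : ∀ j, u < j → j < b → s j ≤ s b := fun j huj hjb =>
    hbmax j (Finset.mem_Ioc.2 ⟨huj, hjb.le.trans hbv_le⟩)
  rcases lt_or_ge (s b) (s u) with hsu | hsu
  · exact .inl (.head' (parentIdx_eq_some_iff.2 ⟨hub, hsu, hdom⟩) hbv)
  · have hdom' : ∀ j, u ≤ j → j < b → s j ≤ s b := by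
      intro j huj hjb
      rcases huj.eq_or_lt with rfl | huj
      exacts [hsu, hdom j huj hjb]
    obtain ⟨a, hpar, hau, hanc⟩ := exists_sibling_ancOrSelf hub hdom'
    exact .inr ⟨a, b, hpar, hau.trans_lt hub, hanc, hbv⟩

/-- The pre-order traversal of the tree (omitting the root) visits the blocks exactly in
reading order: the visit order coincides with the index order. -/
theorem stmt4 {n : ℕ} (s : Fin n → ℝ) (u v : Fin n) :
    preBefore s u v ↔ u < v :=
  ⟨preBefore.lt, preBefore_of_lt⟩
end

section
/- In the tree built by the nearest-preceding-larger-size rule, the depth of node x_i (number of edges from the root) is at most 1 plus the number of distinct values in { s_j : j < i, s_j > s_i }. In particular, if the sizes take at most k distinct values overall, the tree has height at most k. -/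
lemma parent_mem {n : ℕ} (s : Fin n → ℝ) {i p : Fin n} (h : parentIdx s i = some p) :
    p < i ∧ s i < s p := by
  unfold parentIdx at h
  split_ifs at h with hne
  · have := Finset.max'_mem _ hne
    rw [Option.some_inj] at h
    rw [h] at this
    simpa using this

lemma card_lt {n : ℕ} (s : Fin n → ℝ) {i p : Fin n} (h : parentIdx s i = some p) :
    ((Finset.univ.filter fun j => j < p ∧ s p < s j).image s).card <
    ((Finset.univ.filter fun j => j < i ∧ s i < s j).image s).card := by
  obtain ⟨hpi, hsi⟩ := parent_mem s h
  have hsub : ((Finset.univ.filter fun j => j < p ∧ s p < s j).image s) ⊆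
      (((Finset.univ.filter fun j => j < i ∧ s i < s j).image s).erase (s p)) := by
    intro x hx
    simp only [Finset.mem_image, Finset.mem_filter, Finset.mem_univ, true_and] at hx
    obtain ⟨j, ⟨hjp, hsp⟩, rfl⟩ := hx
    refine Finset.mem_erase.mpr ⟨ne_of_gt hsp, ?_⟩
    simp only [Finset.mem_image, Finset.mem_filter, Finset.mem_univ, true_and]
    exact ⟨j, ⟨hjp.trans hpi, hsi.trans hsp⟩, rfl⟩
  have hmem : s p ∈ ((Finset.univ.filter fun j => j < i ∧ s i < s j).image s) := by
    simp only [Finset.mem_image, Finset.mem_filter, Finset.mem_univ, true_and]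
    exact ⟨p, ⟨hpi, hsi⟩, rfl⟩
  calc ((Finset.univ.filter fun j => j < p ∧ s p < s j).image s).card
      ≤ (((Finset.univ.filter fun j => j < i ∧ s i < s j).image s).erase (s p)).card :=
        Finset.card_le_card hsub
    _ < _ := Finset.card_erase_lt_of_mem hmem

lemma depth_bound {n : ℕ} (s : Fin n → ℝ) :
    ∀ (k : ℕ) (i : Fin n),
      ((pstep (parentIdx s))^[k] (some i) = none ∧
        ∀ m < k, (pstep (parentIdx s))^[m] (some i) ≠ none) →
      k ≤ 1 + ((Finset.univ.filter fun j => j < i ∧ s i < s j).image s).card := by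
  intro k
  induction k with
  | zero => intro i ⟨h0, _⟩; simp at h0
  | succ k ih =>
    intro i ⟨h0, h1⟩
    have hstep : pstep (parentIdx s) (some i) = parentIdx s i := rfl
    cases hp : parentIdx s i with
    | none =>
      rcases Nat.eq_zero_or_pos k with rfl | hk
      · omega
      · exfalso
        exact h1 1 (by omega) (by rw [Function.iterate_one, hstep, hp])
    | some p =>
      have h0' : (pstep (parentIdx s))^[k] (some p) = none := by
        rw [← h0, Function.iterate_succ_apply, hstep, hp]
      have h1' : ∀ m < k, (pstep (parentIdx s))^[m] (some p) ≠ none := by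
        intro m hm
        have := h1 (m + 1) (by omega)
        rwa [Function.iterate_succ_apply, hstep, hp] at this
      have := ih p ⟨h0', h1'⟩
      have hc := card_lt s hp
      omega

/-- The depth of node `x_i` (the number `k` of parent-link steps needed to reach the root)
is at most `1` plus the number of distinct font sizes among `{s j : j < i, s j > s i}`;
in particular, if the sizes take at most `K` distinct values overall, every depth (hence
the height of the tree) is at most `K`. -/
theorem stmt6 {n : ℕ} (s : Fin n → ℝ) :
    (∀ (i : Fin n) (k : ℕ),
      ((pstep (parentIdx s))^[k] (some i) = none ∧
        ∀ m < k, (pstep (parentIdx s))^[m] (some i) ≠ none) →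
      k ≤ 1 + ((Finset.univ.filter fun j => j < i ∧ s i < s j).image s).card) ∧
    (∀ K : ℕ, (Finset.univ.image s).card ≤ K →
      ∀ (i : Fin n) (k : ℕ),
        ((pstep (parentIdx s))^[k] (some i) = none ∧
          ∀ m < k, (pstep (parentIdx s))^[m] (some i) ≠ none) →
        k ≤ K) := by
  constructor
  · intro i k h; exact depth_bound s k i h
  · intro K hK i k h
    have h1 := depth_bound s k i h
    have hsub : ((Finset.univ.filter fun j => j < i ∧ s i < s j).image s) ⊆
        ((Finset.univ.image s).erase (s i)) := by
      intro x hx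
      simp only [Finset.mem_image, Finset.mem_filter, Finset.mem_univ, true_and] at hx
      obtain ⟨j, ⟨_, hsj⟩, rfl⟩ := hx
      exact Finset.mem_erase.mpr ⟨ne_of_gt hsj, Finset.mem_image_of_mem s (Finset.mem_univ j)⟩
    have hmem : s i ∈ Finset.univ.image s := Finset.mem_image_of_mem s (Finset.mem_univ i)
    have := Finset.card_le_card hsub
    have := Finset.card_erase_lt_of_mem hmem
    omega
end
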